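/- arXiv:math/0006065 — 4 statements merged into one kernel-verified Lean document; each statement's English description precedes it below -/
import Mathlib

section
/- Let G be a nilpotent group of class at most two and let g ∈ Z(G). Then there exists a nilpotent group K of class at most two containing G as a subgroup such that g ∈ [K,K]. Moreover, if G has odd exponent n, then K may be chosen of exponent n. -/
/-!
Let `χ : R → Z(G)` be additive, with `R` a commutative ring. On `G × R × R` put
`(x, a, b) * (y, c, d) = (x y χ(a d), a + c, b + d)`: the central product of `G` with the
Heisenberg group over `R`, its centre glued to `Z(G)` along `χ`. Here
`⁅(x, a, b), (y, c, d)⁆ = (⁅x, y⁆ χ(a d - b c), 0, 0)`, so the extension has class at most two when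
`G` does, and `χ 1 = ⁅(1, 1, 0), (1, 0, 1)⁆` is a commutator. Taking `R = ZMod n` with `χ 1 = g`
(possible as soon as `g ^ n = 1`; `n = 0` gives `R = ℤ`) proves both parts, because
`(x, a, b) ^ k = (x ^ k χ(C(k, 2) a b), k a, k b)` and `n ∣ C(n, 2)` for odd `n`.
-/

universe u

open scoped commutatorElement

lemma Odd.dvd_choose_two {n : ℕ} (hn : Odd n) : n ∣ n.choose 2 := by
  obtain ⟨m, rfl⟩ := hn
  refine ⟨m, ?_⟩
  rw [Nat.choose_two_right, Nat.add_sub_cancel, mul_left_comm, Nat.mul_div_cancel_left _ two_pos]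

lemma commutatorElement_mem_commutator {G : Type*} [Group G] (x y : G) :
    ⁅x, y⁆ ∈ commutator G := by
  rw [commutator_def]
  exact Subgroup.commutator_mem_commutator (Subgroup.mem_top x) (Subgroup.mem_top y)

variable {G : Type u} [Group G] {R : Type} [CommRing R]

def centralOfAdd (χ : R →+ Additive (Subgroup.center G)) (r : R) : G :=
  (Additive.toMul (χ r) : Subgroup.center G)

section centralOfAdd

variable (χ : R →+ Additive (Subgroup.center G))

lemma centralOfAdd_mem_center (r : R) : centralOfAdd χ r ∈ Subgroup.center G :=
  (Additive.toMul (χ r)).2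

lemma centralOfAdd_add (r s : R) :
    centralOfAdd χ (r + s) = centralOfAdd χ r * centralOfAdd χ s := by
  simp [centralOfAdd]

@[simp] lemma centralOfAdd_zero : centralOfAdd χ 0 = 1 := by simp [centralOfAdd]

lemma mul_centralOfAdd_mul (x y : G) (r : R) :
    x * centralOfAdd χ r * y = x * y * centralOfAdd χ r := by
  rw [mul_assoc, (centralOfAdd_mem_center χ r).comm y, mul_assoc]

lemma mul_centralOfAdd_mul_centralOfAdd (x : G) (r s : R) :
    x * centralOfAdd χ r * centralOfAdd χ s = x * centralOfAdd χ (r + s) := by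
  rw [centralOfAdd_add, mul_assoc]

end centralOfAdd

structure HeisenbergCentralProduct (χ : R →+ Additive (Subgroup.center G)) : Type u where
  base : G
  fst : R
  snd : R

namespace HeisenbergCentralProduct

variable {χ : R →+ Additive (Subgroup.center G)}

instance : Mul (HeisenbergCentralProduct χ) :=
  ⟨fun p q => ⟨p.base * q.base * centralOfAdd χ (p.fst * q.snd), p.fst + q.fst, p.snd + q.snd⟩⟩

instance : One (HeisenbergCentralProduct χ) := ⟨⟨1, 0, 0⟩⟩

instance : Inv (HeisenbergCentralProduct χ) :=
  ⟨fun p => ⟨p.base⁻¹ * centralOfAdd χ (p.fst * p.snd), -p.fst, -p.snd⟩⟩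

lemma mk_mul_mk (x y : G) (a b c d : R) :
    (⟨x, a, b⟩ * ⟨y, c, d⟩ : HeisenbergCentralProduct χ) =
      ⟨x * y * centralOfAdd χ (a * d), a + c, b + d⟩ := rfl

lemma one_def : (1 : HeisenbergCentralProduct χ) = ⟨1, 0, 0⟩ := rfl

lemma inv_mk (x : G) (a b : R) :
    (⟨x, a, b⟩⁻¹ : HeisenbergCentralProduct χ) = ⟨x⁻¹ * centralOfAdd χ (a * b), -a, -b⟩ := rfl

instance : Group (HeisenbergCentralProduct χ) := by
  refine Group.ofLeftAxioms ?_ ?_ ?_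
  · rintro ⟨x, a, b⟩ ⟨y, c, d⟩ ⟨z, e, f⟩
    simp only [mk_mul_mk, mk.injEq]
    refine ⟨?_, add_assoc a c e, add_assoc b d f⟩
    rw [mul_centralOfAdd_mul, mul_centralOfAdd_mul_centralOfAdd, ← mul_assoc x,
      mul_centralOfAdd_mul_centralOfAdd, ← mul_assoc x]
    ring_nf
  · rintro ⟨x, a, b⟩
    simp [one_def, mk_mul_mk]
  · rintro ⟨x, a, b⟩
    simp only [inv_mk, mk_mul_mk, one_def, mk.injEq]
    refine ⟨?_, neg_add_cancel a, neg_add_cancel b⟩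
    rw [mul_centralOfAdd_mul, mul_centralOfAdd_mul_centralOfAdd]
    simp

lemma commutatorElement_mk (x y : G) (a b c d : R) :
    ⁅(⟨x, a, b⟩ : HeisenbergCentralProduct χ), ⟨y, c, d⟩⁆ =
      (⟨⁅x, y⁆ * centralOfAdd χ (a * d - b * c), 0, 0⟩ : HeisenbergCentralProduct χ) := by
  simp only [commutatorElement_def, mk_mul_mk, inv_mk, mk.injEq]
  refine ⟨?_, by ring, by ring⟩
  simp only [← mul_assoc]
  rw [mul_centralOfAdd_mul_centralOfAdd, mul_centralOfAdd_mul_centralOfAdd, mul_centralOfAdd_mul,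
    mul_centralOfAdd_mul_centralOfAdd, mul_centralOfAdd_mul, mul_centralOfAdd_mul,
    mul_centralOfAdd_mul_centralOfAdd]
  ring_nf

lemma mk_pow (x : G) (a b : R) (k : ℕ) :
    (⟨x, a, b⟩ : HeisenbergCentralProduct χ) ^ k =
      ⟨x ^ k * centralOfAdd χ (k.choose 2 * (a * b)), k * a, k * b⟩ := by
  induction k with
  | zero => simp [one_def]
  | succ k ih =>
    rw [pow_succ, ih, mk_mul_mk, mk.injEq]
    refine ⟨?_, by push_cast; ring, by push_cast; ring⟩
    rw [mul_centralOfAdd_mul, mul_centralOfAdd_mul_centralOfAdd, ← pow_succ,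
      Nat.choose_succ_succ, Nat.choose_one_right]
    push_cast
    ring_nf

variable (χ) in
def inl : G →* HeisenbergCentralProduct χ where
  toFun x := ⟨x, 0, 0⟩
  map_one' := rfl
  map_mul' x y := by simp [mk_mul_mk]

lemma inl_injective : Function.Injective (inl χ) := fun _ _ h => congrArg base h

lemma inl_mem_center {z : G} (hz : z ∈ Subgroup.center G) :
    inl χ z ∈ Subgroup.center (HeisenbergCentralProduct χ) := by
  refine Subgroup.mem_center_iff.mpr fun ⟨y, c, d⟩ => ?_
  simp [inl, mk_mul_mk, Subgroup.mem_center_iff.mp hz y]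

lemma commutator_le_center (hG : commutator G ≤ Subgroup.center G) :
    commutator (HeisenbergCentralProduct χ) ≤ Subgroup.center (HeisenbergCentralProduct χ) := by
  rw [commutator_def, Subgroup.commutator_le]
  rintro ⟨x, a, b⟩ - ⟨y, c, d⟩ -
  rw [commutatorElement_mk]
  exact inl_mem_center (Subgroup.mul_mem _ (hG (commutatorElement_mem_commutator x y))
    (centralOfAdd_mem_center χ _))

lemma inl_mem_commutator {g : G} (hg : centralOfAdd χ 1 = g) :
    inl χ g ∈ commutator (HeisenbergCentralProduct χ) := by
  have h : inl χ g = ⁅(⟨1, 1, 0⟩ : HeisenbergCentralProduct χ), ⟨1, 0, 1⟩⁆ := by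
    simp [commutatorElement_mk, inl, hg]
  exact h ▸ commutatorElement_mem_commutator _ _

lemma pow_eq_one {n : ℕ} (hn : Odd n) (hR : (n : R) = 0) (hG : ∀ x : G, x ^ n = 1)
    (p : HeisenbergCentralProduct χ) : p ^ n = 1 := by
  obtain ⟨k, hk⟩ := hn.dvd_choose_two
  obtain ⟨x, a, b⟩ := p
  simp [mk_pow, one_def, hR, hk, hG]

end HeisenbergCentralProduct

def zmodToCenter {g : G} (hg : g ∈ Subgroup.center G) {n : ℕ} (hgn : g ^ n = 1) :
    ZMod n →+ Additive (Subgroup.center G) :=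
  ZMod.lift n ⟨zmultiplesHom _ (Additive.ofMul ⟨g, hg⟩), by
    simp [← ofMul_pow, Subtype.ext_iff, hgn]⟩

lemma centralOfAdd_zmodToCenter_one {g : G} (hg : g ∈ Subgroup.center G) {n : ℕ}
    (hgn : g ^ n = 1) : centralOfAdd (zmodToCenter hg hgn) 1 = g := by
  rw [centralOfAdd, zmodToCenter, ← Int.cast_one, ZMod.lift_coe]
  simp

open HeisenbergCentralProduct in
/-- A central element of a nil-2 group becomes a commutator in some nil-2 extension;
if `G` has odd exponent `n`, the extension may be chosen of exponent `n`. -/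
theorem stmt_9 {G : Type u} [Group G] (hG : commutator G ≤ Subgroup.center G)
    (g : G) (hg : g ∈ Subgroup.center G) :
    (∃ (K : Type u) (_ : Group K), commutator K ≤ Subgroup.center K ∧
      ∃ φ : G →* K, Function.Injective φ ∧ φ g ∈ commutator K) ∧
    (∀ n : ℕ, Odd n → (∀ x : G, x ^ n = 1) →
      ∃ (K : Type u) (_ : Group K), commutator K ≤ Subgroup.center K ∧
        ∃ φ : G →* K, Function.Injective φ ∧ φ g ∈ commutator K ∧
          ∀ k : K, k ^ n = 1) := by
  refine ⟨?_, fun n hn hexp => ?_⟩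
  · exact ⟨_, inferInstance, commutator_le_center hG, inl _, inl_injective,
      inl_mem_commutator (centralOfAdd_zmodToCenter_one hg (pow_zero g))⟩
  · exact ⟨_, inferInstance, commutator_le_center hG, inl _, inl_injective,
      inl_mem_commutator (centralOfAdd_zmodToCenter_one hg (hexp g)),
      pow_eq_one hn (ZMod.natCast_self n) hexp⟩
end

section
/- Let x be an element of a nilpotent group G of class at most two, and suppose x has a k-th root in some nil-2 extension K of G. Then x commutes with every element y ∈ G whose image in G/[G,G] has order dividing k. -/
/-!
In a group of nilpotency class at most two the commutator map is bimultiplicative, so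
`⁅r ^ k, y⁆ = ⁅r, y⁆ ^ k = ⁅r, y ^ k⁆`. Since `y ^ k ∈ [G, G] ⊆ [K, K]` is central in `K`,
the right-hand side is trivial, hence so is `⁅x, y⁆ = ⁅r ^ k, y⁆`.
-/

section NilpotencyClassTwo

open Subgroup
open scoped commutatorElement

variable {K : Type*} [Group K]

theorem commutatorElement_mem_center (hK : commutator K ≤ center K) (a b : K) :
    ⁅a, b⁆ ∈ center K :=
  hK (commutator_mem_commutator (mem_top a) (mem_top b))

theorem commutatorElement_mul_left_of_le_center (hK : commutator K ≤ center K) (a b c : K) :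
    ⁅a * b, c⁆ = ⁅a, c⁆ * ⁅b, c⁆ := by
  have hbc (g : K) : Commute g ⁅b, c⁆ := mem_center_iff.mp (commutatorElement_mem_center hK b c) g
  rw [commutatorElement_mul_left_eq_conj_mul, (hbc a).eq, mul_inv_cancel_right]
  exact (hbc _).eq.symm

theorem commutatorElement_mul_right_of_le_center (hK : commutator K ≤ center K) (a b c : K) :
    ⁅a, b * c⁆ = ⁅a, b⁆ * ⁅a, c⁆ := by
  have hac (g : K) : Commute g ⁅a, c⁆ := mem_center_iff.mp (commutatorElement_mem_center hK a c) g
  rw [commutatorElement_mul_right_eq_mul_conj, mul_assoc _ b, (hac b).eq, ← mul_assoc,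
    mul_inv_cancel_right]

theorem commutatorElement_pow_left_of_le_center (hK : commutator K ≤ center K) (a b : K) (n : ℕ) :
    ⁅a ^ n, b⁆ = ⁅a, b⁆ ^ n := by
  induction n with
  | zero => simp
  | succ n ih => rw [pow_succ, commutatorElement_mul_left_of_le_center hK, ih, pow_succ]

theorem commutatorElement_pow_right_of_le_center (hK : commutator K ≤ center K) (a b : K) (n : ℕ) :
    ⁅a, b ^ n⁆ = ⁅a, b⁆ ^ n := by
  induction n with
  | zero => simp
  | succ n ih => rw [pow_succ, commutatorElement_mul_right_of_le_center hK, ih, pow_succ]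

end NilpotencyClassTwo

theorem stmt_14_general {K : Type*} [Group K] (hK : commutator K ≤ Subgroup.center K)
    (G : Subgroup K) (k : ℕ) (x : K)
    (r : K) (hr : r ^ k = x)
    (y : K) (hyk : y ^ k ∈ ⁅G, G⁆) :
    Commute x y := by
  have hyk_central : y ^ k ∈ Subgroup.center K :=
    hK (Subgroup.commutator_mono le_top le_top hyk)
  rw [← commutatorElement_eq_one_iff_commute, ← hr,
    commutatorElement_pow_left_of_le_center hK, ← commutatorElement_pow_right_of_le_center hK,
    commutatorElement_eq_one_iff_commute]
  exact Subgroup.mem_center_iff.mp hyk_central r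

/-- If `x ∈ G` has a `k`-th root in a nil-2 extension `K` of `G`, then `x` commutes with
every `y ∈ G` whose image in `G/[G,G]` has order dividing `k`. -/
theorem stmt_14 {K : Type*} [Group K] (hK : commutator K ≤ Subgroup.center K)
    (G : Subgroup K) (k : ℕ) (x : K) (hx : x ∈ G)
    (r : K) (hr : r ^ k = x)
    (y : K) (hy : y ∈ G) (hyk : y ^ k ∈ ⁅G, G⁆) :
    Commute x y :=
  stmt_14_general hK G k x r hr y hyk
end

section
/- Let G be a nilpotent group of class at most two of exponent n with Z(G) = [G,G]. Then an element x ∈ G has an n-th root in some nil-2 extension of G if and only if x ∈ [G,G]. -/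
/-!
In a group whose commutators are central, `⁅a, b⁆` is multiplicative in each argument, so
`⁅r ^ n, y⁆ = ⁅r, y ^ n⁆ = 1` whenever `y ^ n = 1`: an `n`-th power commutes with every element
of exponent `n`. In a group of exponent `n` an element with an `n`-th root in a nil-2 extension is
therefore central. Conversely, a central `c` acquires the `n`-th root `(1, 1)` in
`(G × ℤ) ⧸ ⟨(c⁻¹, n)⟩`, which still has central commutators and contains `G`.
-/

open scoped commutatorElement
open Subgroup

section NilpotencyClassTwo

variable {K : Type*} [Group K]

theorem commutator_le_center_iff :
    commutator K ≤ center K ↔ ∀ a b : K, ⁅a, b⁆ ∈ center K := by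
  simp [commutator_def, Subgroup.commutator_le]

theorem commutatorElement_pow_right_of_commute {a b : K} (h : Commute ⁅a, b⁆ b) (k : ℕ) :
    ⁅a, b ^ k⁆ = ⁅a, b⁆ ^ k := by
  have hconj : a * b * a⁻¹ = ⁅a, b⁆ * b := by group
  calc ⁅a, b ^ k⁆ = (a * b * a⁻¹) ^ k * (b ^ k)⁻¹ := by rw [conj_pow, commutatorElement_def]
    _ = ⁅a, b⁆ ^ k := by rw [hconj, h.mul_pow, mul_inv_cancel_right]

theorem commutatorElement_pow_left_of_commute {a b : K} (h : Commute ⁅a, b⁆ a) (k : ℕ) :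
    ⁅a ^ k, b⁆ = ⁅a, b⁆ ^ k := by
  have h' : Commute ⁅b, a⁆ a := by simpa [commutatorElement_inv] using h.inv_left
  rw [← commutatorElement_inv, commutatorElement_pow_right_of_commute h', ← inv_pow,
    commutatorElement_inv]

theorem commute_pow_of_pow_eq_one (hK : commutator K ≤ center K) (r : K) {y : K} {n : ℕ}
    (hy : y ^ n = 1) : Commute (r ^ n) y := by
  have hcentral := commutator_le_center_iff.mp hK r y
  rw [← commutatorElement_eq_one_iff_commute,
    commutatorElement_pow_left_of_commute (mem_center_iff.mp hcentral r).symm,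
    ← commutatorElement_pow_right_of_commute (mem_center_iff.mp hcentral y).symm, hy,
    commutatorElement_one_right]

theorem commutator_le_center_of_surjective {L : Type*} [Group L] {f : K →* L}
    (hf : Function.Surjective f) (hK : commutator K ≤ center K) :
    commutator L ≤ center L := by
  rw [commutator_le_center_iff] at hK ⊢
  intro a b
  obtain ⟨a, rfl⟩ := hf a
  obtain ⟨b, rfl⟩ := hf b
  rw [← map_commutatorElement, mem_center_iff]
  intro c
  obtain ⟨c, rfl⟩ := hf c
  rw [← map_mul, ← map_mul, mem_center_iff.mp (hK a b) c]

theorem commutator_prod_le_center {H : Type*} [Group H] (hK : commutator K ≤ center K)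
    (hH : commutator H ≤ center H) : commutator (K × H) ≤ center (K × H) := by
  rw [commutator_def, ← top_prod_top, commutator_prod_prod, Subgroup.center_prod]
  exact prod_mono hK hH

end NilpotencyClassTwo

theorem Subgroup.normal_of_le_center {G : Type*} [Group G] {N : Subgroup G}
    (hN : N ≤ center G) : N.Normal where
  conj_mem n hn g := by rwa [mem_center_iff.mp (hN hn) g, mul_inv_cancel_right]

theorem mem_center_of_pow_eq_map {G K : Type*} [Group G] [Group K]
    (hK : commutator K ≤ center K) {n : ℕ} (hexp : ∀ y : G, y ^ n = 1) {φ : G →* K}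
    (hφ : Function.Injective φ) {x : G} {r : K} (hr : r ^ n = φ x) : x ∈ center G := by
  refine mem_center_iff.mpr fun y ↦ hφ ?_
  rw [map_mul, map_mul, ← hr]
  exact (commute_pow_of_pow_eq_one hK r (by rw [← map_pow, hexp, map_one])).eq.symm

theorem comap_inl_zpowers_eq_bot {G : Type*} [Group G] (c : G) {n : ℕ} (hn : n ≠ 0) :
    (zpowers (c, Multiplicative.ofAdd (n : ℤ))).comap (MonoidHom.inl G (Multiplicative ℤ)) =
      ⊥ := by
  refine eq_bot_iff.mpr fun g ⟨k, hk⟩ ↦ ?_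
  have hk0 : k = 0 := by simpa [hn] using congrArg (Multiplicative.toAdd ∘ Prod.snd) hk
  simpa [hk0] using (congrArg Prod.fst hk).symm

theorem exists_extension_pow_eq_of_mem_center {G : Type u} [Group G]
    (hG : commutator G ≤ center G) {c : G} (hc : c ∈ center G) {n : ℕ} (hn : n ≠ 0) :
    ∃ (K : Type u) (_ : Group K), commutator K ≤ center K ∧
      ∃ φ : G →* K, Function.Injective φ ∧ ∃ r : K, r ^ n = φ c := by
  set g₀ : G × Multiplicative ℤ := (c⁻¹, Multiplicative.ofAdd (n : ℤ))
  set N := zpowers g₀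
  have hg₀ : g₀ ∈ center (G × Multiplicative ℤ) :=
    mem_center_iff.mpr fun g ↦ Prod.ext (mem_center_iff.mp (inv_mem hc) g.1) (mul_comm _ _)
  have : N.Normal := normal_of_le_center (zpowers_le.mpr hg₀)
  refine ⟨_ ⧸ N, inferInstance,
    commutator_le_center_of_surjective (QuotientGroup.mk'_surjective N)
      (commutator_prod_le_center hG (CommGroup.center_eq_top (G := Multiplicative ℤ) ▸ le_top)),
    (QuotientGroup.mk' N).comp (MonoidHom.inl _ _), ?_, QuotientGroup.mk (1, .ofAdd 1), ?_⟩
  · rw [← MonoidHom.ker_eq_bot_iff, ← MonoidHom.comap_ker, QuotientGroup.ker_mk']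
    exact comap_inl_zpowers_eq_bot c⁻¹ hn
  · rw [← QuotientGroup.mk_pow, MonoidHom.comp_apply, MonoidHom.inl_apply,
      QuotientGroup.mk'_apply, eq_comm, QuotientGroup.eq]
    convert mem_zpowers g₀ using 1
    ext <;> simp [g₀]

/-- In a nil-2 group of exponent `n` with `Z(G) = [G,G]`, an element has an `n`-th root
in some nil-2 extension if and only if it lies in `[G,G]`. -/
theorem stmt_15 {G : Type u} [Group G] (hZ : Subgroup.center G = commutator G)
    (n : ℕ) (hn : 0 < n) (hexp : ∀ x : G, x ^ n = 1) (x : G) :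
    (∃ (K : Type u) (_ : Group K), commutator K ≤ Subgroup.center K ∧
      ∃ φ : G →* K, Function.Injective φ ∧ ∃ r : K, r ^ n = φ x) ↔
    x ∈ commutator G := by
  constructor
  · rintro ⟨K, _, hK, φ, hφ, r, hr⟩
    exact hZ ▸ mem_center_of_pow_eq_map hK hexp hφ hr
  · intro hx
    exact exists_extension_pow_eq_of_mem_center hZ.ge (hZ ▸ hx) hn.ne'
end

section
/- Let G be the group with nil-2 presentation ⟨x, y ∣ x^(pⁿ) = y^(pⁿ) = [x,y]^(p^(n-1)) = e⟩, where p is an odd prime and n > 1. Then G is isomorphic to the subgroup generated by a^p and b^p in the group A = ⟨a, b ∣ a^(p^(n+1)) = b^(p^(n+1)) = [a,b]^(p^(n+1)) = e⟩ (nil-2 presentation), and the element [a,b]^p of A lies in the dominion of that subgroup in A (with respect to the variety of nil-2 groups) but not in the subgroup itself. -/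
/-!
In a group of class two, `[u^i, v^j] = [u, v]^(i*j)`, and a group generated by `x, y` consists of
the elements `x^i y^j [x, y]^k`. The universal property of `G` gives `φ : G →* A` with
`x ↦ a^p`, `y ↦ b^p`, and that of `A` gives `ψ` from `A` onto the Heisenberg group over
`ℤ/p^(n+1)` with `a, b` going to the standard generators. Then `ψ ∘ φ` sends `x^i y^j [x, y]^k`
to `(ip, jp, kp²)`, which is trivial only if `x^i`, `y^j`, `[x, y]^k` are, so `φ` is injective.
`ψ` maps `⟨a^p, b^p⟩` into the triples `(p·, p·, p²·)` but `[a, b]^p` to `(0, 0, p)`. Finally,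
`[α, β]^p = [α^p, β] = [α, β^p]` in class two, so homomorphisms agreeing on `a^p` and `b^p` agree
on `[a, b]^p`.
-/

open scoped commutatorElement

section ClassTwo

/-! In this section the commutator of `u` and `v` is `u⁻¹ * v⁻¹ * u * v`, not Mathlib's `⁅u, v⁆`. -/

variable {H : Type*} [Group H] (hH : commutator H ≤ Subgroup.center H)
include hH

theorem inv_mul_inv_mul_mul_mem_center (u v : H) : u⁻¹ * v⁻¹ * u * v ∈ Subgroup.center H := by
  have hc : ⁅u⁻¹, v⁻¹⁆ ∈ commutator H := by
    rw [commutator_def]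
    exact Subgroup.commutator_mem_commutator (Subgroup.mem_top _) (Subgroup.mem_top _)
  simpa [commutatorElement_def] using hH hc

def commutatorLeftHom (v : H) : H →* H where
  toFun w := w⁻¹ * v⁻¹ * w * v
  map_one' := by group
  map_mul' w₁ w₂ := by
    have h := Subgroup.mem_center_iff.mp (inv_mul_inv_mul_mul_mem_center hH w₁ v) w₂⁻¹
    calc (w₁ * w₂)⁻¹ * v⁻¹ * (w₁ * w₂) * v
        = w₂⁻¹ * (w₁⁻¹ * v⁻¹ * w₁ * v) * v⁻¹ * w₂ * v := by group
      _ = w₁⁻¹ * v⁻¹ * w₁ * v * (w₂⁻¹ * v⁻¹ * w₂ * v) := by rw [h]; group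

theorem commutator_zpow_left (u v : H) (i : ℤ) :
    (u ^ i)⁻¹ * v⁻¹ * u ^ i * v = (u⁻¹ * v⁻¹ * u * v) ^ i :=
  map_zpow (commutatorLeftHom hH v) u i

theorem commutator_zpow_right (u v : H) (j : ℤ) :
    u⁻¹ * (v ^ j)⁻¹ * u * v ^ j = (u⁻¹ * v⁻¹ * u * v) ^ j :=
  calc u⁻¹ * (v ^ j)⁻¹ * u * v ^ j = ((v ^ j)⁻¹ * u⁻¹ * v ^ j * u)⁻¹ := by group
    _ = ((v⁻¹ * u⁻¹ * v * u)⁻¹) ^ j := by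
      rw [commutator_zpow_left hH, inv_zpow]
    _ = (u⁻¹ * v⁻¹ * u * v) ^ j := by group

theorem commutator_zpow_zpow (u v : H) (i j : ℤ) :
    (u ^ i)⁻¹ * (v ^ j)⁻¹ * u ^ i * v ^ j = (u⁻¹ * v⁻¹ * u * v) ^ (i * j) := by
  rw [commutator_zpow_right hH, commutator_zpow_left hH, zpow_mul]

theorem commutator_pow_pow (u v : H) (i j : ℕ) :
    (u ^ i)⁻¹ * (v ^ j)⁻¹ * u ^ i * v ^ j = (u⁻¹ * v⁻¹ * u * v) ^ (i * j) := by
  exact_mod_cast commutator_zpow_zpow hH u v i j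

theorem zpow_mul_zpow_comm_commutator (u v : H) (i j : ℤ) :
    v ^ j * u ^ i = u ^ i * v ^ j * (u⁻¹ * v⁻¹ * u * v) ^ (-(i * j)) := by
  rw [zpow_neg, ← commutator_zpow_zpow hH]
  group

theorem exists_eq_zpow_mul_zpow_mul_commutator_zpow {x y g : H}
    (hg : g ∈ Subgroup.closure {x, y}) :
    ∃ i j k : ℤ, g = x ^ i * y ^ j * (x⁻¹ * y⁻¹ * x * y) ^ k := by
  obtain ⟨c, hc_def⟩ : ∃ c, x⁻¹ * y⁻¹ * x * y = c := ⟨_, rfl⟩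
  rw [hc_def]
  have hc (k : ℤ) (w : H) : c ^ k * w = w * c ^ k :=
    (Subgroup.mem_center_iff.mp
      (Subgroup.zpow_mem _ (hc_def ▸ inv_mul_inv_mul_mul_mem_center hH x y) k) w).symm
  have hy (e i j k : ℤ) :
      y ^ e * (x ^ i * y ^ j * c ^ k) = x ^ i * y ^ (e + j) * c ^ (k - i * e) := by
    calc y ^ e * (x ^ i * y ^ j * c ^ k) = y ^ e * x ^ i * y ^ j * c ^ k := by
          simp only [mul_assoc]
      _ = x ^ i * y ^ e * (c ^ (-(i * e)) * y ^ j) * c ^ k := by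
        rw [zpow_mul_zpow_comm_commutator hH, hc_def, mul_assoc (x ^ i * y ^ e)]
      _ = x ^ i * y ^ (e + j) * c ^ (k - i * e) := by
        rw [hc]; group
  induction hg using Subgroup.closure_induction_left with
  | one => exact ⟨0, 0, 0, by simp⟩
  | mul_left s hs g _ ih =>
    obtain ⟨i, j, k, rfl⟩ := ih
    rcases hs with rfl | rfl
    · exact ⟨1 + i, j, k, by group⟩
    · exact ⟨i, 1 + j, k - i * 1, by rw [← hy]; group⟩
  | inv_mul_cancel s hs g _ ih =>
    obtain ⟨i, j, k, rfl⟩ := ih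
    rcases hs with rfl | rfl
    · exact ⟨-1 + i, j, k, by group⟩
    · exact ⟨i, -1 + j, k - i * (-1), by rw [← hy]; group⟩

theorem commutator_pow_eq_of_pow_eq {α β α' β' : H} (p : ℕ) (hα : α ^ p = α' ^ p)
    (hβ : β ^ p = β' ^ p) :
    (α⁻¹ * β⁻¹ * α * β) ^ p = (α'⁻¹ * β'⁻¹ * α' * β') ^ p := by
  have hl (u v : H) : (u⁻¹ * v⁻¹ * u * v) ^ p = (u ^ p)⁻¹ * v⁻¹ * u ^ p * v := by
    simpa using (commutator_pow_pow hH u v p 1).symm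
  have hr (u v : H) : (u⁻¹ * v⁻¹ * u * v) ^ p = u⁻¹ * (v ^ p)⁻¹ * u * v ^ p := by
    simpa using (commutator_pow_pow hH u v 1 p).symm
  rw [hl, hα, ← hl, hr, hβ, ← hr]

end ClassTwo

/-- `⟨x, y, z⟩` is the unitriangular matrix `!![1, y, -z; 0, 1, x; 0, 0, 1]`; the signs are chosen
so that `a⁻¹ * b⁻¹ * a * b = ⟨0, 0, 1⟩` for `a = ⟨1, 0, 0⟩` and `b = ⟨0, 1, 0⟩`. -/
@[ext] structure Heisenberg (R : Type*) where
  x : R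
  y : R
  z : R

namespace Heisenberg

variable {R : Type*} [CommRing R]

instance : Mul (Heisenberg R) := ⟨fun g h => ⟨g.x + h.x, g.y + h.y, g.z + h.z - g.y * h.x⟩⟩
instance : One (Heisenberg R) := ⟨⟨0, 0, 0⟩⟩
instance : Inv (Heisenberg R) := ⟨fun g => ⟨-g.x, -g.y, -g.z - g.x * g.y⟩⟩

@[simp] theorem mul_x (g h : Heisenberg R) : (g * h).x = g.x + h.x := rfl
@[simp] theorem mul_y (g h : Heisenberg R) : (g * h).y = g.y + h.y := rfl
@[simp] theorem mul_z (g h : Heisenberg R) : (g * h).z = g.z + h.z - g.y * h.x := rfl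
@[simp] theorem one_x : (1 : Heisenberg R).x = 0 := rfl
@[simp] theorem one_y : (1 : Heisenberg R).y = 0 := rfl
@[simp] theorem one_z : (1 : Heisenberg R).z = 0 := rfl
@[simp] theorem inv_x (g : Heisenberg R) : g⁻¹.x = -g.x := rfl
@[simp] theorem inv_y (g : Heisenberg R) : g⁻¹.y = -g.y := rfl
@[simp] theorem inv_z (g : Heisenberg R) : g⁻¹.z = -g.z - g.x * g.y := rfl

instance : Group (Heisenberg R) where
  mul_assoc g h k := by ext <;> simp only [mul_x, mul_y, mul_z] <;> ring
  one_mul g := by ext <;> simp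
  mul_one g := by ext <;> simp
  inv_mul_cancel g := by ext <;> simp; ring

theorem commutator_le_center : commutator (Heisenberg R) ≤ Subgroup.center (Heisenberg R) := by
  rw [commutator_def, Subgroup.commutator_le]
  rintro g - h -
  rw [Subgroup.mem_center_iff]
  intro w
  ext <;> simp [commutatorElement_def]; ring

theorem commutator_mk (s t : R) :
    (⟨s, 0, 0⟩ : Heisenberg R)⁻¹ * (⟨0, t, 0⟩ : Heisenberg R)⁻¹ * ⟨s, 0, 0⟩ * ⟨0, t, 0⟩ =
      ⟨0, 0, s * t⟩ := by
  ext <;> simp [mul_comm]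

theorem zpow_of_y_eq_zero {g : Heisenberg R} (hg : g.y = 0) (i : ℤ) :
    g ^ i = ⟨i * g.x, 0, i * g.z⟩ := by
  induction i using Int.induction_on with
  | zero => ext <;> simp
  | succ i ih => ext <;> simp [zpow_add_one, ih, hg] <;> ring
  | pred i ih => ext <;> simp [zpow_sub_one, ih, hg] <;> ring

theorem zpow_of_x_eq_zero {g : Heisenberg R} (hg : g.x = 0) (i : ℤ) :
    g ^ i = ⟨0, i * g.y, i * g.z⟩ := by
  induction i using Int.induction_on with
  | zero => ext <;> simp
  | succ i ih => ext <;> simp [zpow_add_one, ih, hg] <;> ring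
  | pred i ih => ext <;> simp [zpow_sub_one, ih, hg] <;> ring

theorem pow_of_y_eq_zero {g : Heisenberg R} (hg : g.y = 0) (n : ℕ) :
    g ^ n = ⟨n * g.x, 0, n * g.z⟩ := by
  simpa using zpow_of_y_eq_zero hg n

theorem pow_of_x_eq_zero {g : Heisenberg R} (hg : g.x = 0) (n : ℕ) :
    g ^ n = ⟨0, n * g.y, n * g.z⟩ := by
  simpa using zpow_of_x_eq_zero hg n

def subgroupOfIdeal (I : Ideal R) : Subgroup (Heisenberg R) where
  carrier := {g | g.x ∈ I ∧ g.y ∈ I ∧ g.z ∈ I ^ 2}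
  one_mem' := by simp
  mul_mem' := by
    rintro g h ⟨hgx, hgy, hgz⟩ ⟨hhx, hhy, hhz⟩
    exact ⟨add_mem hgx hhx, add_mem hgy hhy,
      sub_mem (add_mem hgz hhz) (pow_two I ▸ Ideal.mul_mem_mul hgy hhx)⟩
  inv_mem' := by
    rintro g ⟨hgx, hgy, hgz⟩
    exact ⟨neg_mem hgx, neg_mem hgy,
      sub_mem (neg_mem hgz) (pow_two I ▸ Ideal.mul_mem_mul hgx hgy)⟩

end Heisenberg

theorem commutator_le_center_of_injective {H K : Type*} [Group H] [Group K] (f : H →* K)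
    (hf : Function.Injective f) (hK : commutator K ≤ Subgroup.center K) :
    commutator H ≤ Subgroup.center H := by
  rw [commutator_def, Subgroup.commutator_le]
  rintro g₁ - g₂ -
  rw [Subgroup.mem_center_iff]
  intro w
  apply hf
  have hc : ⁅f g₁, f g₂⁆ ∈ commutator K := by
    rw [commutator_def]
    exact Subgroup.commutator_mem_commutator (Subgroup.mem_top _) (Subgroup.mem_top _)
  simpa only [map_mul, map_commutatorElement] using Subgroup.mem_center_iff.mp (hK hc) (f w)

theorem ZMod.dvd_of_intCast_mul_natCast_eq_zero {N m d : ℕ} (hN : m * d ∣ N) (hd : d ≠ 0) {i : ℤ}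
    (h : (i : ZMod N) * d = 0) : (m : ℤ) ∣ i := by
  have hid : (N : ℤ) ∣ i * d := (ZMod.intCast_zmod_eq_zero_iff_dvd _ _).mp (by push_cast; exact h)
  have hmd : ((m : ℤ) * d) ∣ i * d := (Int.natCast_dvd_natCast.mpr hN).trans (by exact_mod_cast hid)
  exact (mul_dvd_mul_iff_right (by exact_mod_cast hd)).mp hmd

theorem ZMod.not_natCast_sq_dvd_natCast {N p : ℕ} (hN : p ^ 2 ∣ N) (hp : 2 ≤ p) :
    ¬ (p : ZMod N) ^ 2 ∣ p := by
  rintro ⟨t, ht⟩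
  have hcast := congrArg (ZMod.castHom hN (ZMod (p ^ 2))) ht
  simp only [map_natCast, map_mul, map_pow] at hcast
  rw [← Nat.cast_pow, ZMod.natCast_self, zero_mul, ZMod.natCast_eq_zero_iff] at hcast
  have hle : p ^ 2 ≤ p := Nat.le_of_dvd (by omega) hcast
  nlinarith

theorem injective_of_map_eq_heisenberg {G : Type*} [Group G]
    (hG : commutator G ≤ Subgroup.center G) {x y : G} (hgen : Subgroup.closure {x, y} = ⊤)
    {N m l d : ℕ} (hm : m * d ∣ N) (hl : l * d ^ 2 ∣ N) (hd : d ≠ 0) (hx : x ^ m = 1)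
    (hy : y ^ m = 1) (hxy : (x⁻¹ * y⁻¹ * x * y) ^ l = 1) (χ : G →* Heisenberg (ZMod N))
    (hχx : χ x = ⟨d, 0, 0⟩) (hχy : χ y = ⟨0, d, 0⟩) : Function.Injective χ := by
  have hχc : χ (x⁻¹ * y⁻¹ * x * y) = ⟨0, 0, (d : ZMod N) ^ 2⟩ := by
    simp only [map_mul, map_inv, hχx, hχy, Heisenberg.commutator_mk, sq]
  have zpow_eq_one {g : G} {e : ℕ} (hg : g ^ e = 1) {i : ℤ} (hi : (e : ℤ) ∣ i) : g ^ i = 1 :=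
    orderOf_dvd_iff_zpow_eq_one.mp
      ((Int.natCast_dvd_natCast.mpr (orderOf_dvd_of_pow_eq_one hg)).trans hi)
  rw [injective_iff_map_eq_one]
  intro g hg
  obtain ⟨i, j, k, rfl⟩ :=
    exists_eq_zpow_mul_zpow_mul_commutator_zpow hG (hgen ▸ Subgroup.mem_top g)
  simp only [map_mul, map_zpow, hχx, hχy, hχc, Heisenberg.zpow_of_y_eq_zero,
    Heisenberg.zpow_of_x_eq_zero] at hg
  obtain ⟨hi, hj, hk⟩ : (i : ZMod N) * d = 0 ∧ (j : ZMod N) * d = 0 ∧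
      (k : ZMod N) * (d ^ 2 : ℕ) = 0 := by
    simpa using Heisenberg.ext_iff.mp hg
  rw [zpow_eq_one hx (ZMod.dvd_of_intCast_mul_natCast_eq_zero hm hd hi),
    zpow_eq_one hy (ZMod.dvd_of_intCast_mul_natCast_eq_zero hm hd hj),
    zpow_eq_one hxy (ZMod.dvd_of_intCast_mul_natCast_eq_zero hl (pow_ne_zero 2 hd) hk), one_mul,
    one_mul]

theorem commutator_pow_not_mem_closure {A R : Type*} [Group A] [CommRing R]
    (ψ : A →* Heisenberg R) {a b : A} (hψa : ψ a = ⟨1, 0, 0⟩) (hψb : ψ b = ⟨0, 1, 0⟩) {r : ℕ}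
    (hr : ¬ (r : R) ^ 2 ∣ r) :
    (a⁻¹ * b⁻¹ * a * b) ^ r ∉ Subgroup.closure {a ^ r, b ^ r} := by
  have hle : Subgroup.closure {a ^ r, b ^ r} ≤
      (Heisenberg.subgroupOfIdeal (Ideal.span {(r : R)})).comap ψ := by
    rw [Subgroup.closure_le]
    rintro _ (rfl | rfl) <;>
      simp [Heisenberg.subgroupOfIdeal, hψa, hψb, Heisenberg.pow_of_y_eq_zero,
        Heisenberg.pow_of_x_eq_zero]
  intro hmem
  obtain ⟨-, -, hz⟩ := hle hmem
  simp [hψa, hψb, Heisenberg.commutator_mk, Heisenberg.pow_of_y_eq_zero,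
    Ideal.span_singleton_pow, Ideal.mem_span_singleton] at hz
  exact hr hz

theorem map_commutator_pow_eq_of_eqOn_closure {A C : Type*} [Group A] [Group C]
    (hC : commutator C ≤ Subgroup.center C) (p : ℕ) {a b : A} {f g : A →* C}
    (hfg : ∀ z ∈ Subgroup.closure {a ^ p, b ^ p}, f z = g z) :
    f ((a⁻¹ * b⁻¹ * a * b) ^ p) = g ((a⁻¹ * b⁻¹ * a * b) ^ p) := by
  have hfa : f a ^ p = g a ^ p := by
    simpa only [map_pow] using hfg _ (Subgroup.subset_closure (Set.mem_insert _ _))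
  have hfb : f b ^ p = g b ^ p := by
    simpa only [map_pow] using hfg _ (Subgroup.subset_closure (Set.mem_insert_of_mem _ rfl))
  simpa only [map_pow, map_mul, map_inv] using commutator_pow_eq_of_pow_eq hC p hfa hfb

theorem exists_hom_heisenberg_of_universal {A : Type u} [Group A] {a b : A} (N : ℕ)
    (huniv : ∀ (H : Type u) (_ : Group H), commutator H ≤ Subgroup.center H →
      ∀ α β : H, α ^ N = 1 → β ^ N = 1 → (α⁻¹ * β⁻¹ * α * β) ^ N = 1 →
        ∃ f : A →* H, f a = α ∧ f b = β) :
    ∃ ψ : A →* Heisenberg (ZMod N), ψ a = ⟨1, 0, 0⟩ ∧ ψ b = ⟨0, 1, 0⟩ := by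
  let e : ULift.{u} (Heisenberg (ZMod N)) ≃* Heisenberg (ZMod N) := MulEquiv.ulift
  have hpow {g : Heisenberg (ZMod N)} (hg : g ^ N = 1) : e.symm g ^ N = 1 := by
    rw [← map_pow, hg, map_one]
  obtain ⟨f, hfa, hfb⟩ := huniv _ inferInstance
    (commutator_le_center_of_injective e.toMonoidHom e.injective Heisenberg.commutator_le_center)
    (e.symm ⟨1, 0, 0⟩) (e.symm ⟨0, 1, 0⟩)
    (hpow (by simp [Heisenberg.ext_iff, Heisenberg.pow_of_y_eq_zero]))
    (hpow (by simp [Heisenberg.ext_iff, Heisenberg.pow_of_x_eq_zero]))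
    (by
      rw [← map_inv, ← map_inv, ← map_mul, ← map_mul, ← map_mul]
      exact hpow (by simp [Heisenberg.ext_iff, Heisenberg.commutator_mk,
        Heisenberg.pow_of_y_eq_zero]))
  exact ⟨e.toMonoidHom.comp f, by simp [hfa], by simp [hfb]⟩

theorem stmt_19_general {A G : Type u} [Group A] [Group G]
    (p n : ℕ) (hp : p.Prime) (hn : 1 < n)
    (a b : A)
    (hA2 : commutator A ≤ Subgroup.center A)
    (ha : a ^ p ^ (n + 1) = 1) (hb : b ^ p ^ (n + 1) = 1)
    (hab : (a⁻¹ * b⁻¹ * a * b) ^ p ^ (n + 1) = 1)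
    (hAuniv : ∀ (H : Type u) (_ : Group H), commutator H ≤ Subgroup.center H →
      ∀ α β : H, α ^ p ^ (n + 1) = 1 → β ^ p ^ (n + 1) = 1 →
        (α⁻¹ * β⁻¹ * α * β) ^ p ^ (n + 1) = 1 →
        ∃ f : A →* H, f a = α ∧ f b = β)
    (x y : G)
    (hG2 : commutator G ≤ Subgroup.center G)
    (hx : x ^ p ^ n = 1) (hy : y ^ p ^ n = 1)
    (hxy : (x⁻¹ * y⁻¹ * x * y) ^ p ^ (n - 1) = 1)
    (hGgen : Subgroup.closure {x, y} = ⊤)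
    (hGuniv : ∀ (H : Type u) (_ : Group H), commutator H ≤ Subgroup.center H →
      ∀ α β : H, α ^ p ^ n = 1 → β ^ p ^ n = 1 →
        (α⁻¹ * β⁻¹ * α * β) ^ p ^ (n - 1) = 1 →
        ∃ f : G →* H, f x = α ∧ f y = β) :
    Nonempty (G ≃* (Subgroup.closure {a ^ p, b ^ p} : Subgroup A)) ∧
    (a⁻¹ * b⁻¹ * a * b) ^ p ∉ Subgroup.closure {a ^ p, b ^ p} ∧
    (∀ (C : Type u) (_ : Group C), commutator C ≤ Subgroup.center C →
      ∀ f g : A →* C, (∀ z ∈ Subgroup.closure {a ^ p, b ^ p}, f z = g z) →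
        f ((a⁻¹ * b⁻¹ * a * b) ^ p) = g ((a⁻¹ * b⁻¹ * a * b) ^ p)) := by
  have hexp : p * p * p ^ (n - 1) = p ^ (n + 1) := by
    rw [← sq, ← pow_add]; congr 1; omega
  obtain ⟨ψ, hψa, hψb⟩ := exists_hom_heisenberg_of_universal _ hAuniv
  obtain ⟨φ, hφx, hφy⟩ := hGuniv A inferInstance hA2 (a ^ p) (b ^ p)
    (by rw [← pow_mul, ← pow_succ', ha]) (by rw [← pow_mul, ← pow_succ', hb])
    (by rw [commutator_pow_pow hA2, ← pow_mul, hexp, hab])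
  have hrange : φ.range = Subgroup.closure {a ^ p, b ^ p} := by
    rw [MonoidHom.range_eq_map, ← hGgen, MonoidHom.map_closure, Set.image_pair, hφx, hφy]
  have hinj : Function.Injective φ := by
    have h := injective_of_map_eq_heisenberg hG2 hGgen (N := p ^ (n + 1)) (d := p)
      (pow_succ p n).symm.dvd
      (by rw [← pow_add]; exact pow_dvd_pow p (by omega)) hp.ne_zero hx hy hxy (ψ.comp φ)
      (by simp [hφx, hψa, Heisenberg.pow_of_y_eq_zero])
      (by simp [hφy, hψb, Heisenberg.pow_of_x_eq_zero])
    exact Function.Injective.of_comp (f := ψ) h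
  have hp2 : ¬ (p : ZMod (p ^ (n + 1))) ^ 2 ∣ p :=
    ZMod.not_natCast_sq_dvd_natCast (pow_dvd_pow p (by omega)) hp.two_le
  exact ⟨⟨(MonoidHom.ofInjective hinj).trans (MulEquiv.subgroupCongr hrange)⟩,
    commutator_pow_not_mem_closure ψ hψa hψb hp2,
    fun C _ hC _ _ hfg => map_commutator_pow_eq_of_eqOn_closure hC p hfg⟩

/-- Let `A` be the nil-2 presented group `⟨a,b ∣ a^(p^(n+1)) = b^(p^(n+1)) =
[a,b]^(p^(n+1)) = e⟩` (characterized by generation, the relations, and the universal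
property among nil-2 groups), and let `G` be the nil-2 presented group
`⟨x,y ∣ x^(pⁿ) = y^(pⁿ) = [x,y]^(p^(n-1)) = e⟩`.  Then `G` is isomorphic to the subgroup
of `A` generated by `a^p` and `b^p`, and `[a,b]^p` lies in the nil-2 dominion of that
subgroup in `A` but not in the subgroup itself. -/
theorem stmt_19 {A G : Type u} [Group A] [Group G]
    (p n : ℕ) (hp : p.Prime) (hodd : Odd p) (hn : 1 < n)
    (a b : A)
    (hA2 : commutator A ≤ Subgroup.center A)
    (ha : a ^ p ^ (n + 1) = 1) (hb : b ^ p ^ (n + 1) = 1)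
    (hab : (a⁻¹ * b⁻¹ * a * b) ^ p ^ (n + 1) = 1)
    (hAgen : Subgroup.closure {a, b} = ⊤)
    (hAuniv : ∀ (H : Type u) (_ : Group H), commutator H ≤ Subgroup.center H →
      ∀ α β : H, α ^ p ^ (n + 1) = 1 → β ^ p ^ (n + 1) = 1 →
        (α⁻¹ * β⁻¹ * α * β) ^ p ^ (n + 1) = 1 →
        ∃ f : A →* H, f a = α ∧ f b = β)
    (x y : G)
    (hG2 : commutator G ≤ Subgroup.center G)
    (hx : x ^ p ^ n = 1) (hy : y ^ p ^ n = 1)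
    (hxy : (x⁻¹ * y⁻¹ * x * y) ^ p ^ (n - 1) = 1)
    (hGgen : Subgroup.closure {x, y} = ⊤)
    (hGuniv : ∀ (H : Type u) (_ : Group H), commutator H ≤ Subgroup.center H →
      ∀ α β : H, α ^ p ^ n = 1 → β ^ p ^ n = 1 →
        (α⁻¹ * β⁻¹ * α * β) ^ p ^ (n - 1) = 1 →
        ∃ f : G →* H, f x = α ∧ f y = β) :
    Nonempty (G ≃* (Subgroup.closure {a ^ p, b ^ p} : Subgroup A)) ∧
    (a⁻¹ * b⁻¹ * a * b) ^ p ∉ Subgroup.closure {a ^ p, b ^ p} ∧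
    (∀ (C : Type u) (_ : Group C), commutator C ≤ Subgroup.center C →
      ∀ f g : A →* C, (∀ z ∈ Subgroup.closure {a ^ p, b ^ p}, f z = g z) →
        f ((a⁻¹ * b⁻¹ * a * b) ^ p) = g ((a⁻¹ * b⁻¹ * a * b) ^ p)) :=
  stmt_19_general p n hp hn a b hA2 ha hb hab hAuniv x y hG2 hx hy hxy hGgen hGuniv
end
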